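/- arXiv:2509.04189 — 4 statements merged into one kernel-verified Lean document; each statement's English description precedes it below -/
import Mathlib

section
/- Let n ≥ 1 and let Γ ⊆ ℝⁿ be a closed set. For p ∈ Γ and r > 0 define β_Γ(p,r) = (1/r) · inf over all (n−1)-dimensional linear subspaces π of ℝⁿ of sup_{q ∈ Γ ∩ B(p,r)} dist(q, p + π). If lim_{r→0} β_Γ(p,r) = 0 for every p ∈ Γ, then the Hausdorff dimension of Γ is at most n − 1. -/
open MeasureTheory Metric Filter Topology Set

/-- The flatness coefficient `β_Γ(p,r)`: `(1/r)` times the infimum over all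
`(n-1)`-dimensional linear subspaces `π` of `ℝⁿ` of
`sup_{q ∈ Γ ∩ B(p,r)} dist(q, p + π)` (the supremum over the empty set is `0`). -/
noncomputable def betaNum {n : ℕ} (Γ : Set (EuclideanSpace ℝ (Fin n)))
    (p : EuclideanSpace ℝ (Fin n)) (r : ℝ) : ℝ :=
  r⁻¹ * sInf {s : ℝ | ∃ π : Submodule ℝ (EuclideanSpace ℝ (Fin n)),
    Module.finrank ℝ π = n - 1 ∧
    s = sSup ((fun q => Metric.infDist q ((fun v => p + v) '' (π : Set (EuclideanSpace ℝ (Fin n)))))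
        '' (Γ ∩ ball p r))}

/-!
Fix `d > n - 1` and a small `ε > 0`. The hypothesis makes `Γ` a countable union of the sets
`flatPart Γ ε r₀` of points at which `β < ε` at every scale `ρ ≤ r₀`. Near such a point `x`, at
scale `ρ`, the set lies within `ερ` of a hyperplane through `x`; projecting onto it and packing
`(n - 1)`-dimensional balls covers it by `N ≈ (2/ε)^(n-1)` balls of radius `3ερ` centred in the
set. Iterating, `flatPart Γ ε r₀ ∩ B(x, r₀)` is covered by `N^k` balls of radius `r₀ (3ε)^k`, and
since `N (3ε)^d → 0` as `ε → 0`, its `d`-dimensional Hausdorff measure vanishes.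
-/

open Module
open scoped ENNReal NNReal

theorem exists_submodule_finrank_eq {K V : Type*} [DivisionRing K] [AddCommGroup V]
    [Module K V] [FiniteDimensional K V] {k : ℕ} (hk : k ≤ finrank K V) :
    ∃ W : Submodule K V, finrank K W = k :=
  ⟨Submodule.span K (range (finBasis K V ∘ Fin.castLE hk)), by
    rw [finrank_span_eq_card ((finBasis K V).linearIndependent.comp _ (Fin.castLE_injective hk)),
      Fintype.card_fin]⟩

section Packing

variable {V : Type*} [NormedAddCommGroup V] [NormedSpace ℝ V] [FiniteDimensional ℝ V]

theorem Metric.IsSeparated.card_le_of_subset_closedBall {C : Finset V} {c : V} {R : ℝ}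
    {δ : ℝ≥0} (hδ : 0 < δ) (hR : 0 ≤ R) (hsep : IsSeparated δ (C : Set V))
    (hC : (C : Set V) ⊆ closedBall c R) :
    (C.card : ℝ) ≤ (2 * R / δ + 1) ^ finrank ℝ V := by
  borelize V
  set μ : Measure V := Measure.addHaar
  have hδ' : (0 : ℝ) < δ := hδ
  have hdisj : (C : Set V).PairwiseDisjoint fun x => ball x (δ / 2) := by
    intro x hx y hy hxy
    refine ball_disjoint_ball ?_
    have : (δ : ℝ≥0∞) < edist x y := hsep hx hy hxy
    rw [edist_dist, ← ENNReal.ofReal_coe_nnreal,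
      ENNReal.ofReal_lt_ofReal_iff_of_nonneg δ.coe_nonneg] at this
    linarith
  have hsub : (⋃ x ∈ C, ball x (δ / 2)) ⊆ ball c (R + δ / 2) := by
    refine iUnion₂_subset fun x hx => ball_subset_ball' ?_
    have := mem_closedBall.1 (hC hx)
    linarith
  have hvol : (C.card : ℝ≥0∞) * ENNReal.ofReal ((δ / 2) ^ finrank ℝ V) * μ (ball 0 1)
      ≤ ENNReal.ofReal ((R + δ / 2) ^ finrank ℝ V) * μ (ball 0 1) := by
    calc (C.card : ℝ≥0∞) * ENNReal.ofReal ((δ / 2) ^ finrank ℝ V) * μ (ball 0 1)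
        = ∑ x ∈ C, μ (ball x (δ / 2)) := by
          simp only [Measure.addHaar_ball_of_pos μ _ (half_pos hδ'), Finset.sum_const,
            nsmul_eq_mul, mul_assoc]
      _ = μ (⋃ x ∈ C, ball x (δ / 2)) :=
          (measure_biUnion_finset hdisj fun _ _ => measurableSet_ball).symm
      _ ≤ μ (ball c (R + δ / 2)) := measure_mono hsub
      _ = _ := Measure.addHaar_ball_of_pos μ _ (by positivity)
  rw [ENNReal.mul_le_mul_iff_left (measure_ball_pos μ _ one_pos).ne' measure_ball_lt_top.ne,
    ← ENNReal.ofReal_natCast, ← ENNReal.ofReal_mul (by positivity),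
    ENNReal.ofReal_le_ofReal_iff (by positivity), ← le_div_iff₀ (by positivity), ← div_pow] at hvol
  refine hvol.trans_eq (congrArg (· ^ _) ?_)
  field_simp

theorem exists_finset_subset_cover_closedBall_of_subset_closedBall {A : Set V} {c : V}
    {R δ : ℝ} (hδ : 0 < δ) (hR : 0 ≤ R) (hA : A ⊆ closedBall c R) :
    ∃ T : Finset V, ↑T ⊆ A ∧ (T.card : ℝ) ≤ (2 * R / δ + 1) ^ finrank ℝ V ∧
      A ⊆ ⋃ t ∈ T, closedBall t δ := by
  lift δ to ℝ≥0 using hδ.le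
  set N := ⌊(2 * R / δ + 1) ^ finrank ℝ V⌋₊
  have hcard : ∀ C : Finset V, ↑C ⊆ A → IsSeparated δ (C : Set V) → C.card ≤ N := fun C hCA hC =>
    Nat.le_floor (hC.card_le_of_subset_closedBall hδ hR (hCA.trans hA))
  have hpack : packingNumber δ A ≤ N := by
    refine iSup₂_le fun C hCA => iSup_le fun hC => ?_
    rcases C.finite_or_infinite with hfin | hinf
    · rw [hfin.encard_eq_coe_toFinset_card]
      exact_mod_cast hcard _ (by simpa) (by simpa)
    · obtain ⟨F, hFC, hFcard⟩ := hinf.exists_subset_card_eq (N + 1)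
      have := hcard F (hFC.trans hCA) (hC.mono hFC)
      omega
  have htop : packingNumber δ A ≠ ⊤ := ne_top_of_le_ne_top (ENat.natCast_ne_top N) hpack
  have hfin : (maximalSeparatedSet δ A).Finite :=
    Set.finite_of_encard_le_coe ((encard_maximalSeparatedSet htop).trans_le hpack)
  refine ⟨hfin.toFinset, by simpa using maximalSeparatedSet_subset, ?_, fun x hx => ?_⟩
  · exact (Nat.cast_le.2 (hcard _ (by simpa using maximalSeparatedSet_subset)
      (by simpa using isSeparated_maximalSeparatedSet))).trans (Nat.floor_le (by positivity))
  · obtain ⟨t, ht, hxt⟩ := isCover_maximalSeparatedSet htop hx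
    exact mem_iUnion₂.2 ⟨t, by simpa using ht, mem_closedBall.2 (edist_le_coe.1 hxt)⟩

end Packing

section FlatCover

variable {V : Type*} [NormedAddCommGroup V] [InnerProductSpace ℝ V]

theorem exists_finset_subset_cover_ball_of_forall_infDist_lt (π : Submodule ℝ V)
    [FiniteDimensional ℝ π] {S : Set V} {x : V} {ρ ε : ℝ} (hρ : 0 < ρ) (hε : 0 < ε)
    (hS : S ⊆ ball x ρ) (hflat : ∀ y ∈ S, infDist y ((fun v => x + v) '' (π : Set V)) < ε * ρ) :
    ∃ T : Finset V, ↑T ⊆ S ∧ (T.card : ℝ) ≤ (2 / ε + 1) ^ finrank ℝ π ∧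
      S ⊆ ⋃ t ∈ T, ball t (3 * ε * ρ) := by
  classical
  set f : V → π := fun y => π.orthogonalProjectionOnto (y - x)
  have hnear : ∀ y ∈ S, dist y (x + f y) < ε * ρ := by
    intro y hy
    obtain ⟨_, ⟨v, hv, rfl⟩, hyv⟩ :=
      (infDist_lt_iff (s := (fun v => x + v) '' (π : Set V)) ⟨x, 0, π.zero_mem, add_zero x⟩).1
        (hflat y hy)
    calc dist y (x + f y) = ‖(y - x) - π.starProjection (y - x)‖ := by
          rw [dist_eq_norm, Submodule.starProjection_apply, sub_sub]
      _ ≤ ‖(y - x) - v‖ := (π.starProjection_minimal _).trans_le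
          (ciInf_le ⟨0, forall_mem_range.2 fun _ => norm_nonneg _⟩ (⟨v, hv⟩ : π))
      _ < ε * ρ := by rwa [sub_sub, ← dist_eq_norm]
  have hball : f '' S ⊆ closedBall 0 ρ := by
    rintro _ ⟨y, hy, rfl⟩
    rw [mem_closedBall_zero_iff]
    exact (π.norm_orthogonalProjectionOnto_apply_le _).trans
      (by rw [← dist_eq_norm]; exact (hS hy).le)
  obtain ⟨T₀, hT₀S, hT₀card, hT₀cover⟩ :=
    exists_finset_subset_cover_closedBall_of_subset_closedBall (δ := ε * ρ) (by positivity)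
      hρ.le hball
  set g := Function.invFunOn f S
  refine ⟨T₀.image g, ?_, ?_, fun y hy => ?_⟩
  · simp only [Finset.coe_image, image_subset_iff]
    exact fun t ht => Function.invFunOn_mem (hT₀S ht)
  · calc ((T₀.image g).card : ℝ) ≤ T₀.card := by exact_mod_cast Finset.card_image_le
      _ ≤ _ := hT₀card
      _ = _ := by field_simp
  · obtain ⟨t, ht, hyt⟩ := mem_iUnion₂.1 (hT₀cover (mem_image_of_mem f hy))
    have hgt : f (g t) = t := Function.invFunOn_eq (hT₀S ht)
    refine mem_iUnion₂.2 ⟨g t, Finset.mem_image_of_mem g ht, ?_⟩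
    calc dist y (g t)
        ≤ dist y (x + f y) + dist (x + f y) (x + f (g t)) + dist (x + f (g t)) (g t) :=
          dist_triangle4 _ _ _ _
      _ < ε * ρ + ε * ρ + ε * ρ := by
          have h₁ := hnear y hy
          have h₂ : dist (f y) t ≤ ε * ρ := mem_closedBall.1 hyt
          have h₃ := hnear (g t) (Function.invFunOn_mem (hT₀S ht))
          rw [hgt] at h₃
          rw [dist_add_left, ← Subtype.dist_eq, hgt, dist_comm _ (g t)]
          linarith
      _ = 3 * ε * ρ := by ring

end FlatCover

section UniformlyCoverable

variable {X : Type*} [MetricSpace X] {E : Set X} {N l r₀ : ℝ}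

def UniformlyCoverable (E : Set X) (N l r₀ : ℝ) : Prop :=
  ∀ x ∈ E, ∀ ρ ∈ Ioc 0 r₀, ∃ T : Finset X, ↑T ⊆ E ∧ (T.card : ℝ) ≤ N ∧
    E ∩ ball x ρ ⊆ ⋃ t ∈ T, ball t (l * ρ)

theorem UniformlyCoverable.exists_finset_cover_ball_pow (hE : UniformlyCoverable E N l r₀)
    (hr₀ : 0 < r₀) (hl₀ : 0 < l) (hl₁ : l ≤ 1) {x : X} (hx : x ∈ E) (k : ℕ) :
    ∃ T : Finset X, ↑T ⊆ E ∧ (T.card : ℝ) ≤ N ^ k ∧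
      E ∩ ball x r₀ ⊆ ⋃ t ∈ T, ball t (r₀ * l ^ k) := by
  classical
  have hN : 0 ≤ N := by
    obtain ⟨T, -, hT, -⟩ := hE x hx r₀ ⟨hr₀, le_rfl⟩
    exact (Nat.cast_nonneg _).trans hT
  induction k with
  | zero => exact ⟨{x}, by simpa, by simp, fun y hy => by simpa using hy.2⟩
  | succ k ih =>
    obtain ⟨T, hTE, hTcard, hTcov⟩ := ih
    have hρ : r₀ * l ^ k ∈ Ioc 0 r₀ :=
      ⟨by positivity, mul_le_of_le_one_right hr₀.le (pow_le_one₀ hl₀.le hl₁)⟩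
    choose! C hCE hCcard hCcov using fun y hy => hE y hy _ hρ
    refine ⟨T.biUnion C, ?_, ?_, fun z hz => ?_⟩
    · simpa using fun y hy => hCE y (hTE hy)
    · calc ((T.biUnion C).card : ℝ) ≤ ∑ y ∈ T, ((C y).card : ℝ) := by
            exact_mod_cast Finset.card_biUnion_le
        _ ≤ ∑ _y ∈ T, N := Finset.sum_le_sum fun y hy => hCcard y (hTE hy)
        _ = T.card * N := by simp
        _ ≤ N ^ k * N := by gcongr
        _ = N ^ (k + 1) := (pow_succ N k).symm
    · obtain ⟨y, hy, hzy⟩ := mem_iUnion₂.1 (hTcov hz)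
      obtain ⟨t, ht, hzt⟩ := mem_iUnion₂.1 (hCcov y (hTE hy) ⟨hz.1, hzy⟩)
      have hradius : r₀ * l ^ (k + 1) = l * (r₀ * l ^ k) := by ring
      exact mem_iUnion₂.2 ⟨t, Finset.mem_biUnion.2 ⟨y, hy, ht⟩, hradius ▸ hzt⟩

variable [MeasurableSpace X] [BorelSpace X]

theorem UniformlyCoverable.hausdorffMeasure_inter_ball_eq_zero
    (hE : UniformlyCoverable E N l r₀) (hr₀ : 0 < r₀) (hl₀ : 0 < l) (hl₁ : l < 1) {d : ℝ}
    (hd : 0 ≤ d) (hNl : N * l ^ d < 1) {x : X} (hx : x ∈ E) : μH[d] (E ∩ ball x r₀) = 0 := by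
  choose T _ hTcard hTcov using hE.exists_finset_cover_ball_pow hr₀ hl₀ hl₁.le hx
  have hN : 0 ≤ N := (Nat.cast_nonneg _).trans (by simpa using hTcard 1)
  have hdiam : ∀ (k : ℕ) (t : T k), ediam (ball (t : X) (r₀ * l ^ k)) ≤
      ENNReal.ofReal (2 * (r₀ * l ^ k)) := fun k t =>
    ediam_le_of_forall_dist_le fun y hy z hz => by
      linarith [dist_triangle_right y z t, mem_ball.1 hy, mem_ball.1 hz]
  have hsum : ∀ k : ℕ, ∑ t : T k, ediam (ball (t : X) (r₀ * l ^ k)) ^ d ≤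
      ENNReal.ofReal ((2 * r₀) ^ d * (N * l ^ d) ^ k) := fun k => calc
    _ ≤ ∑ _t : T k, ENNReal.ofReal (2 * (r₀ * l ^ k)) ^ d :=
        Finset.sum_le_sum fun t _ => ENNReal.rpow_le_rpow (hdiam k t) hd
    _ = ENNReal.ofReal ((T k).card * (2 * (r₀ * l ^ k)) ^ d) := by
        rw [Finset.sum_const, Finset.card_univ, Fintype.card_coe, nsmul_eq_mul,
          ENNReal.ofReal_rpow_of_nonneg (by positivity) hd, ENNReal.ofReal_mul (by positivity),
          ENNReal.ofReal_natCast]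
    _ ≤ ENNReal.ofReal (N ^ k * (2 * (r₀ * l ^ k)) ^ d) := by
        gcongr
        exact hTcard k
    _ = ENNReal.ofReal ((2 * r₀) ^ d * (N * l ^ d) ^ k) := by
        rw [← mul_assoc, Real.mul_rpow (by positivity) (by positivity), mul_pow,
          Real.rpow_pow_comm hl₀.le, mul_left_comm]
  have hlim : Tendsto (fun k : ℕ => ENNReal.ofReal ((2 * r₀) ^ d * (N * l ^ d) ^ k)) atTop
      (𝓝 0) := by
    simpa using ENNReal.tendsto_ofReal
      ((tendsto_pow_atTop_nhds_zero_of_lt_one (by positivity) hNl).const_mul ((2 * r₀) ^ d))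
  have hradius : Tendsto (fun k : ℕ => ENNReal.ofReal (2 * (r₀ * l ^ k))) atTop (𝓝 0) := by
    simpa using ENNReal.tendsto_ofReal
      (((tendsto_pow_atTop_nhds_zero_of_lt_one hl₀.le hl₁).const_mul r₀).const_mul 2)
  refine nonpos_iff_eq_zero.1 ?_
  calc μH[d] (E ∩ ball x r₀)
      ≤ liminf (fun k => ∑ t : T k, ediam (ball (t : X) (r₀ * l ^ k)) ^ d) atTop :=
        Measure.hausdorffMeasure_le_liminf_sum d _ _ hradius (fun k (t : T k) => ball (t : X) _)
          (Eventually.of_forall hdiam) (Eventually.of_forall fun k z hz => by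
            obtain ⟨t, ht, hzt⟩ := mem_iUnion₂.1 (hTcov k hz)
            exact mem_iUnion.2 ⟨⟨t, ht⟩, hzt⟩)
    _ ≤ liminf (fun k : ℕ => ENNReal.ofReal ((2 * r₀) ^ d * (N * l ^ d) ^ k)) atTop :=
        liminf_le_liminf (Eventually.of_forall hsum)
    _ = 0 := hlim.liminf_eq

theorem UniformlyCoverable.hausdorffMeasure_eq_zero [SecondCountableTopology X]
    (hE : UniformlyCoverable E N l r₀) (hr₀ : 0 < r₀) (hl₀ : 0 < l) (hl₁ : l < 1) {d : ℝ}
    (hd : 0 ≤ d) (hNl : N * l ^ d < 1) : μH[d] E = 0 :=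
  measure_null_of_locally_null E fun x hx => ⟨E ∩ ball x r₀,
    inter_mem_nhdsWithin E (ball_mem_nhds x hr₀),
    hE.hausdorffMeasure_inter_ball_eq_zero hr₀ hl₀ hl₁ hd hNl hx⟩

end UniformlyCoverable

theorem tendsto_div_add_one_pow_mul_rpow {k : ℕ} {d : ℝ} (hkd : (k : ℝ) < d) :
    Tendsto (fun ε : ℝ => (2 / ε + 1) ^ k * (3 * ε) ^ d) (𝓝[>] 0) (𝓝 0) := by
  have hcont : ContinuousAt (fun ε : ℝ => (2 + ε) ^ k * 3 ^ d * ε ^ (d - k)) 0 :=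
    (((continuous_const.add continuous_id).pow k).mul continuous_const).continuousAt.mul
      (Real.continuousAt_rpow_const _ _ (Or.inr (sub_pos.2 hkd).le))
  have hzero : (2 + 0 : ℝ) ^ k * 3 ^ d * (0 : ℝ) ^ (d - k) = 0 := by
    rw [Real.zero_rpow (sub_pos.2 hkd).ne', mul_zero]
  refine (hzero ▸ hcont.tendsto).mono_left nhdsWithin_le_nhds |>.congr' ?_
  filter_upwards [self_mem_nhdsWithin] with ε (hε : 0 < ε)
  rw [Real.rpow_sub hε, Real.rpow_natCast, Real.mul_rpow (by norm_num) hε.le,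
    div_add_one hε.ne', div_pow]
  field_simp

section Flatness

variable {n : ℕ} {Γ : Set (EuclideanSpace ℝ (Fin n))}

theorem exists_submodule_forall_infDist_lt_of_betaNum_lt {p : EuclideanSpace ℝ (Fin n)}
    {r ε : ℝ} (hr : 0 < r) (hβ : betaNum Γ p r < ε) :
    ∃ π : Submodule ℝ (EuclideanSpace ℝ (Fin n)), finrank ℝ π = n - 1 ∧
      ∀ q ∈ Γ ∩ ball p r,
        infDist q ((fun v => p + v) '' (π : Set (EuclideanSpace ℝ (Fin n)))) < ε * r := by
  rw [betaNum, inv_mul_lt_iff₀ hr, mul_comm] at hβ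
  -- The infimum is taken over a nonempty set; otherwise it would be the junk value `0`.
  obtain ⟨π₀, hπ₀⟩ := exists_submodule_finrank_eq (K := ℝ)
    (V := EuclideanSpace ℝ (Fin n)) (k := n - 1) (by simp)
  obtain ⟨_, ⟨π, hπ, rfl⟩, hlt⟩ := exists_lt_of_csInf_lt (by exact ⟨_, π₀, hπ₀, rfl⟩) hβ
  have hp : p ∈ (fun v => p + v) '' (π : Set (EuclideanSpace ℝ (Fin n))) :=
    ⟨0, π.zero_mem, add_zero p⟩
  have hbdd : BddAbove
      ((fun q => infDist q ((fun v => p + v) '' (π : Set _))) '' (Γ ∩ ball p r)) :=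
    ⟨r, forall_mem_image.2 fun q hq => (infDist_le_dist_of_mem hp).trans (mem_ball.1 hq.2).le⟩
  exact ⟨π, hπ, fun q hq => (le_csSup hbdd (mem_image_of_mem _ hq)).trans_lt hlt⟩

variable (Γ) in
def flatPart (ε r₀ : ℝ) : Set (EuclideanSpace ℝ (Fin n)) :=
  {p ∈ Γ | ∀ ρ ∈ Ioc 0 r₀, betaNum Γ p ρ < ε}

theorem subset_iUnion_flatPart {ε : ℝ} (hε : 0 < ε)
    (hbeta : ∀ p ∈ Γ, Tendsto (fun r => betaNum Γ p r) (𝓝[>] (0:ℝ)) (𝓝 0)) :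
    Γ ⊆ ⋃ m : ℕ, flatPart Γ ε (1 / (m + 1)) := fun p hp => by
  obtain ⟨u, hu, hsub⟩ := mem_nhdsGT_iff_exists_Ioc_subset.1 (hbeta p hp (Iio_mem_nhds hε))
  obtain ⟨m, hm⟩ := exists_nat_one_div_lt (mem_Ioi.1 hu)
  exact mem_iUnion.2 ⟨m, hp, fun ρ hρ => hsub ⟨hρ.1, hρ.2.trans hm.le⟩⟩

theorem uniformlyCoverable_flatPart {ε : ℝ} (hε : 0 < ε) (r₀ : ℝ) :
    UniformlyCoverable (flatPart Γ ε r₀) ((2 / ε + 1) ^ (n - 1)) (3 * ε) r₀ := by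
  intro x hx ρ hρ
  obtain ⟨π, hπ, hflat⟩ := exists_submodule_forall_infDist_lt_of_betaNum_lt hρ.1 (hx.2 ρ hρ)
  obtain ⟨T, hTS, hTcard, hTcov⟩ := exists_finset_subset_cover_ball_of_forall_infDist_lt π hρ.1
    hε inter_subset_right fun y (hy : y ∈ flatPart Γ ε r₀ ∩ ball x ρ) => hflat y ⟨hy.1.1, hy.2⟩
  exact ⟨T, hTS.trans inter_subset_left, hπ ▸ hTcard, hTcov⟩

end Flatness

theorem beta_decay_implies_dimH_le_general {n : ℕ}
    (Γ : Set (EuclideanSpace ℝ (Fin n)))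
    (hbeta : ∀ p ∈ Γ, Tendsto (fun r => betaNum Γ p r) (𝓝[>] (0:ℝ)) (𝓝 0)) :
    dimH Γ ≤ (n - 1 : ℕ) := by
  refine dimH_le fun d hd => le_of_not_gt fun hlt => ?_
  obtain ⟨ε, hsmall, hε, hε₃⟩ := ((tendsto_div_add_one_pow_mul_rpow (k := n - 1) (d := d)
    (by exact_mod_cast hlt)).eventually (gt_mem_nhds one_pos)).and
    (Ioo_mem_nhdsGT (by norm_num : (0 : ℝ) < 1 / 3)) |>.exists
  have hnull : ∀ m : ℕ, μH[d] (flatPart Γ ε (1 / (m + 1))) = 0 := fun m =>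
    (uniformlyCoverable_flatPart hε _).hausdorffMeasure_eq_zero (by positivity) (by positivity)
      (by linarith) d.2 hsmall
  have hΓ := measure_mono_null (subset_iUnion_flatPart hε hbeta) (measure_iUnion_null hnull)
  exact ENNReal.zero_ne_top (hΓ ▸ hd)

/-- If `Γ ⊆ ℝⁿ` (with `n ≥ 1`) is closed and `β_Γ(p,r) → 0` as `r → 0` for every `p ∈ Γ`,
then the Hausdorff dimension of `Γ` is at most `n - 1`. -/
theorem beta_decay_implies_dimH_le {n : ℕ} (hn : 1 ≤ n)
    (Γ : Set (EuclideanSpace ℝ (Fin n))) (hΓ : IsClosed Γ)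
    (hbeta : ∀ p ∈ Γ, Tendsto (fun r => betaNum Γ p r) (𝓝[>] (0:ℝ)) (𝓝 0)) :
    dimH Γ ≤ (n - 1 : ℕ) :=
  beta_decay_implies_dimH_le_general Γ hbeta
end

section
/- Let M be a d-cone of Radon measures on ℝⁿ, let s > 0, and let ν_i, ν be Radon measures on ℝⁿ such that ν_i → ν in the weak-* sense (i.e. ∫ f dν_i → ∫ f dν for every continuous compactly supported f : ℝⁿ → ℝ). If F_s(ν) > 0, then lim_{i→∞} d_s(ν_i, M) exists and equals d_s(ν, M). -/
open MeasureTheory Metric Filter Topology Set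

/-- The pushforward of `μ` under `T_{a,r}(x) = (x - a)/r`. -/
noncomputable def blowup {n : ℕ} (μ : Measure (EuclideanSpace ℝ (Fin n)))
    (a : EuclideanSpace ℝ (Fin n)) (r : ℝ) : Measure (EuclideanSpace ℝ (Fin n)) :=
  Measure.map (fun x => r⁻¹ • (x - a)) μ

/-- `F_K(μ,ν)`: the supremum of `|∫ f dμ - ∫ f dν|` over continuous `1`-Lipschitz
functions `f` with compact support contained in `K`. -/
noncomputable def FK {n : ℕ} (K : Set (EuclideanSpace ℝ (Fin n)))
    (μ ν : Measure (EuclideanSpace ℝ (Fin n))) : ℝ :=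
  sSup {d : ℝ | ∃ f : EuclideanSpace ℝ (Fin n) → ℝ, Continuous f ∧ LipschitzWith 1 f ∧
    HasCompactSupport f ∧ tsupport f ⊆ K ∧ d = |(∫ x, f x ∂μ) - ∫ x, f x ∂ν|}

/-- `F_r := F_K` for `K` the closed ball of radius `r` centered at the origin. -/
noncomputable def Fr {n : ℕ} (r : ℝ) (μ ν : Measure (EuclideanSpace ℝ (Fin n))) : ℝ :=
  FK (closedBall 0 r) μ ν

/-- `F_r(μ) := F_r(μ, 0)`. -/
noncomputable def Fb {n : ℕ} (r : ℝ) (μ : Measure (EuclideanSpace ℝ (Fin n))) : ℝ :=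
  Fr r μ 0

/-- A collection `M` of nonzero Radon measures is a d-cone if it is invariant under
multiplication by positive constants and under the dilations `T_{0,r}`. -/
def IsDCone {n : ℕ} (M : Set (Measure (EuclideanSpace ℝ (Fin n)))) : Prop :=
  (∀ μ ∈ M, μ ≠ 0 ∧ IsLocallyFiniteMeasure μ) ∧
  (∀ μ ∈ M, ∀ c : ℝ, 0 < c → ENNReal.ofReal c • μ ∈ M) ∧
  (∀ μ ∈ M, ∀ r : ℝ, 0 < r → blowup μ 0 r ∈ M)

/-- The distance `d_s(ν, M)` between `ν` and the d-cone `M` at scale `s`: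
`inf { F_s(ν / F_s(ν), μ) : μ ∈ M, F_s(μ) = 1 }` when `0 < F_s(ν) < ∞`, and `1` otherwise. -/
noncomputable def dCone {n : ℕ} (s : ℝ) (ν : Measure (EuclideanSpace ℝ (Fin n)))
    (M : Set (Measure (EuclideanSpace ℝ (Fin n)))) : ℝ :=
  if Fb s ν = 0 then 1 else
    sInf {d : ℝ | ∃ μ ∈ M, Fb s μ = 1 ∧ d = Fr s ((ENNReal.ofReal (Fb s ν))⁻¹ • ν) μ}

/-- Weak-* convergence of a sequence of measures on `ℝⁿ`: the integrals of every
continuous compactly supported function converge. -/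
def WeakStarTendsto {n : ℕ} (μ : ℕ → Measure (EuclideanSpace ℝ (Fin n)))
    (ν : Measure (EuclideanSpace ℝ (Fin n))) : Prop :=
  ∀ f : EuclideanSpace ℝ (Fin n) → ℝ, Continuous f → HasCompactSupport f →
    Tendsto (fun i => ∫ x, f x ∂(μ i)) atTop (𝓝 (∫ x, f x ∂ν))


/-!
The `1`-Lipschitz test functions supported in a compact set are uniformly bounded and
equicontinuous, so by Arzelà–Ascoli finitely many of them approximate all the others uniformly.
Weak-* convergence of the finitely many corresponding integrals, together with an eventual bound
on the masses of the compact set, gives `F_s(ν_i, ν) → 0`, hence `F_s(ν_i) → F_s(ν) > 0`.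
Being an infimum of `F_s`-distances, `d_s(·, M)` is `1`-Lipschitz in the normalised measure
`ν / F_s(ν)`, and the normalised measures converge for `F_s`.
-/

def lipTestFns {X : Type*} [PseudoMetricSpace X] (K : Set X) : Set (X → ℝ) :=
  {f | Continuous f ∧ LipschitzWith 1 f ∧ HasCompactSupport f ∧ tsupport f ⊆ K}

lemma eq_zero_of_mem_lipTestFns {X : Type*} [PseudoMetricSpace X] {K : Set X} {f : X → ℝ}
    (hf : f ∈ lipTestFns K) {x : X} (hx : x ∉ K) : f x = 0 :=
  image_eq_zero_of_notMem_tsupport fun h => hx (hf.2.2.2 h)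

section UniformApproximation

open scoped BoundedContinuousFunction

variable {F : Type*} [NormedAddCommGroup F] [NormedSpace ℝ F] [Nontrivial F] {K : Set F}

lemma exists_forall_abs_le_of_mem_lipTestFns (hK : Bornology.IsBounded K) :
    ∃ C, ∀ f ∈ lipTestFns K, ∀ x, |f x| ≤ C := by
  obtain ⟨R, hR, hKR⟩ := hK.subset_closedBall_lt 0 0
  obtain ⟨y, hy⟩ := exists_norm_eq F (show 0 ≤ R + 1 by linarith)
  have hyK : y ∉ K := fun h => by
    have := hKR h
    rw [mem_closedBall_zero_iff, hy] at this
    linarith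
  refine ⟨2 * R + 1, fun f hf x => ?_⟩
  by_cases hx : x ∈ K
  · have hxR : ‖x‖ ≤ R := mem_closedBall_zero_iff.1 (hKR hx)
    calc |f x| = dist (f x) (f y) := by
          rw [eq_zero_of_mem_lipTestFns hf hyK, Real.dist_eq, sub_zero]
      _ ≤ dist x y := by simpa using hf.2.1.dist_le_mul x y
      _ ≤ ‖x‖ + ‖y‖ := dist_le_norm_add_norm x y
      _ ≤ 2 * R + 1 := by linarith
  · rw [eq_zero_of_mem_lipTestFns hf hx, abs_zero]
    linarith

lemma exists_finite_net_lipTestFns (hK : IsCompact K) {δ : ℝ} (hδ : 0 < δ) :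
    ∃ t ⊆ lipTestFns K, t.Finite ∧ ∀ f ∈ lipTestFns K, ∃ g ∈ t, ∀ x, |f x - g x| < δ := by
  have : CompactSpace K := isCompact_iff_compactSpace.1 hK
  obtain ⟨C, hC⟩ := exists_forall_abs_le_of_mem_lipTestFns hK.isBounded
  set A : Set (K →ᵇ ℝ) := {g | ∃ f ∈ lipTestFns K, ∀ x : K, g x = f x}
  have hA : TotallyBounded A := by
    refine (BoundedContinuousFunction.arzela_ascoli (Icc (-C) C) isCompact_Icc A ?_ ?_)
      |>.totallyBounded.subset subset_closure
    · rintro g x ⟨f, hf, hgf⟩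
      rw [hgf]
      exact abs_le.1 (hC f hf x)
    · refine (LipschitzWith.uniformEquicontinuous _ 1 fun g => ?_).equicontinuous
      obtain ⟨f, hf, hgf⟩ := g.2
      refine LipschitzWith.of_dist_le_mul fun x y => ?_
      simpa [hgf, Subtype.dist_eq] using hf.2.1.dist_le_mul x y
  obtain ⟨t, htA, ht, hcover⟩ := finite_approx_of_totallyBounded hA δ hδ
  choose! lift hlift using fun g (hg : g ∈ t) => htA hg
  refine ⟨lift '' t, image_subset_iff.2 fun g hg => (hlift g hg).1, ht.image lift,
    fun f hf => ?_⟩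
  let fK : K →ᵇ ℝ :=
    BoundedContinuousFunction.mkOfCompact ⟨K.domRestrict f, hf.1.continuousOn.domRestrict⟩
  obtain ⟨g, hg, hfg⟩ := mem_iUnion₂.1 (hcover ⟨f, hf, fun _ => rfl⟩ : fK ∈ _)
  refine ⟨lift g, mem_image_of_mem lift hg, fun x => ?_⟩
  by_cases hx : x ∈ K
  · have := (BoundedContinuousFunction.dist_coe_le_dist ⟨x, hx⟩).trans_lt (mem_ball.1 hfg)
    rwa [(hlift g hg).2, Real.dist_eq] at this
  · rw [eq_zero_of_mem_lipTestFns hf hx, eq_zero_of_mem_lipTestFns (hlift g hg).1 hx, sub_zero,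
      abs_zero]
    exact hδ

end UniformApproximation

section Integrals

variable {X : Type*} [MeasurableSpace X] {μ : Measure X} {K : Set X}

instance isLocallyFiniteMeasure_ofReal_smul [TopologicalSpace X] [IsLocallyFiniteMeasure μ]
    (a : ℝ) : IsLocallyFiniteMeasure (ENNReal.ofReal a • μ) := by
  rw [show ENNReal.ofReal a • μ = a.toNNReal • μ from (ENNReal.smul_def _ _).symm]
  infer_instance

lemma abs_integral_le_mul_measureReal [TopologicalSpace X] [IsLocallyFiniteMeasure μ]
    (hK : IsCompact K) {f : X → ℝ} (hf : ∀ x ∉ K, f x = 0) {C : ℝ} (hC : ∀ x ∈ K, |f x| ≤ C) :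
    |∫ x, f x ∂μ| ≤ C * μ.real K := by
  rw [← setIntegral_eq_integral_of_forall_compl_eq_zero hf, ← Real.norm_eq_abs]
  exact norm_setIntegral_le_of_norm_le_const hK.measure_lt_top hC

lemma abs_integral_sub_integral_le [PseudoMetricSpace X] [OpensMeasurableSpace X]
    [IsLocallyFiniteMeasure μ] (hK : IsCompact K) {f g : X → ℝ} (hf : f ∈ lipTestFns K)
    (hg : g ∈ lipTestFns K) {δ : ℝ} (hfg : ∀ x, |f x - g x| ≤ δ) :
    |∫ x, f x ∂μ - ∫ x, g x ∂μ| ≤ δ * μ.real K := by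
  rw [← integral_sub (hf.1.integrable_of_hasCompactSupport hf.2.2.1)
    (hg.1.integrable_of_hasCompactSupport hg.2.2.1)]
  refine abs_integral_le_mul_measureReal hK (fun x hx => ?_) fun x _ => hfg x
  rw [eq_zero_of_mem_lipTestFns hf hx, eq_zero_of_mem_lipTestFns hg hx, sub_zero]

lemma measureReal_le_integral_of_eqOn_one [TopologicalSpace X] [OpensMeasurableSpace X]
    [T2Space X] (hK : IsCompact K) {φ : X → ℝ} (hφ : Integrable φ μ) (hφ0 : 0 ≤ φ)
    (hφK : EqOn φ 1 K) : μ.real K ≤ ∫ x, φ x ∂μ :=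
  calc μ.real K = ∫ x in K, φ x ∂μ := by
        rw [setIntegral_congr_fun hK.measurableSet hφK]
        simp
    _ ≤ ∫ x, φ x ∂μ := setIntegral_le_integral hφ (Eventually.of_forall hφ0)

end Integrals

lemma sSup_nonpos_of_forall_mul_mem {S : Set ℝ} (hS : ∀ x ∈ S, ∀ c, 0 ≤ c → c * x ∈ S) :
    sSup S ≤ 0 := by
  by_cases hb : BddAbove S
  · refine Real.sSup_nonpos fun x hx => ?_
    by_contra! hx0
    obtain ⟨B, hB⟩ := hb
    have := hB (hS x hx ((|B| + 1) / x) (by positivity))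
    rw [div_mul_cancel₀ _ hx0.ne'] at this
    linarith [le_abs_self B]
  · rw [Real.sSup_of_not_bddAbove hb]

lemma abs_sInf_image_sub_sInf_image_le {ι : Type*} {T : Set ι} {u v : ι → ℝ} {c : ℝ}
    (hc : 0 ≤ c) (hu : BddBelow (u '' T)) (hv : BddBelow (v '' T))
    (huv : ∀ i ∈ T, |u i - v i| ≤ c) : |sInf (u '' T) - sInf (v '' T)| ≤ c := by
  rcases T.eq_empty_or_nonempty with rfl | hT
  · simpa using hc
  have one_sided : ∀ {u v : ι → ℝ}, BddBelow (u '' T) → (∀ i ∈ T, u i ≤ v i + c) →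
      sInf (u '' T) ≤ sInf (v '' T) + c := fun hu h =>
    sub_le_iff_le_add.1 <| le_csInf (hT.image _) <| forall_mem_image.2 fun i hi =>
      sub_le_iff_le_add.2 <| (csInf_le hu (mem_image_of_mem _ hi)).trans (h i hi)
  refine abs_sub_le_iff.2 ⟨sub_le_iff_le_add'.2 ?_, sub_le_iff_le_add'.2 ?_⟩
  · exact one_sided (v := v) hu fun i hi => by linarith [(abs_sub_le_iff.1 (huv i hi)).1]
  · exact one_sided (v := u) hv fun i hi => by linarith [(abs_sub_le_iff.1 (huv i hi)).2]

section FK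

variable {n : ℕ} {K : Set (EuclideanSpace ℝ (Fin n))} {μ ν ρ : Measure (EuclideanSpace ℝ (Fin n))}

lemma FK_eq_sSup_image (K : Set (EuclideanSpace ℝ (Fin n)))
    (μ ν : Measure (EuclideanSpace ℝ (Fin n))) :
    FK K μ ν = sSup ((fun f => |∫ x, f x ∂μ - ∫ x, f x ∂ν|) '' lipTestFns K) := by
  unfold FK
  congr 1
  ext d
  constructor
  · rintro ⟨f, h1, h2, h3, h4, rfl⟩
    exact ⟨f, ⟨h1, h2, h3, h4⟩, rfl⟩
  · rintro ⟨f, ⟨h1, h2, h3, h4⟩, rfl⟩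
    exact ⟨f, h1, h2, h3, h4, rfl⟩

lemma FK_nonneg : 0 ≤ FK K μ ν :=
  Real.sSup_nonneg <| by
    rintro _ ⟨f, -, -, -, -, rfl⟩
    exact abs_nonneg _

lemma FK_comm : FK K μ ν = FK K ν μ := by
  simp only [FK_eq_sSup_image, abs_sub_comm]

lemma FK_le_of_forall {c : ℝ} (hc : 0 ≤ c)
    (h : ∀ f ∈ lipTestFns K, |∫ x, f x ∂μ - ∫ x, f x ∂ν| ≤ c) : FK K μ ν ≤ c := by
  rw [FK_eq_sSup_image]
  exact Real.sSup_le (forall_mem_image.2 h) hc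

/-- In a zero-dimensional space the test functions are closed under scaling, so either all values
are `0` or they are unbounded, and then `sSup` takes its junk value `0`. -/
lemma FK_eq_zero_of_subsingleton [Subsingleton (EuclideanSpace ℝ (Fin n))] : FK K μ ν = 0 := by
  refine le_antisymm ?_ FK_nonneg
  rw [FK_eq_sSup_image]
  refine sSup_nonpos_of_forall_mul_mem ?_
  rintro _ ⟨f, hf, rfl⟩ c hc
  refine ⟨fun x => c * f x, ⟨continuous_const.mul hf.1, ?_, ?_, ?_⟩, ?_⟩
  · exact LipschitzWith.of_dist_le_mul fun x y => by simp [Subsingleton.elim x y]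
  · exact Set.subsingleton_of_subsingleton.isCompact
  · exact (tsupport_mul_subset_right).trans hf.2.2.2
  · simp only [integral_const_mul, ← mul_sub, abs_mul, abs_of_nonneg hc]

variable [NeZero n] (hK : IsCompact K) [IsLocallyFiniteMeasure μ] [IsLocallyFiniteMeasure ν]
  [IsLocallyFiniteMeasure ρ]
include hK

lemma bddAbove_FK_image :
    BddAbove ((fun f => |∫ x, f x ∂μ - ∫ x, f x ∂ν|) '' lipTestFns K) := by
  obtain ⟨C, hC⟩ := exists_forall_abs_le_of_mem_lipTestFns hK.isBounded
  refine ⟨C * μ.real K + C * ν.real K, forall_mem_image.2 fun f hf => ?_⟩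
  have hf0 : ∀ x ∉ K, f x = 0 := fun x hx => eq_zero_of_mem_lipTestFns hf hx
  exact (abs_sub _ _).trans (add_le_add
    (abs_integral_le_mul_measureReal hK hf0 fun x _ => hC f hf x)
    (abs_integral_le_mul_measureReal hK hf0 fun x _ => hC f hf x))

lemma abs_integral_sub_le_FK {f : EuclideanSpace ℝ (Fin n) → ℝ} (hf : f ∈ lipTestFns K) :
    |∫ x, f x ∂μ - ∫ x, f x ∂ν| ≤ FK K μ ν := by
  rw [FK_eq_sSup_image]
  exact le_csSup (bddAbove_FK_image hK) (mem_image_of_mem _ hf)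

lemma FK_le_add : FK K μ ρ ≤ FK K μ ν + FK K ν ρ :=
  FK_le_of_forall (add_nonneg FK_nonneg FK_nonneg) fun _ hf =>
    (abs_sub_le _ _ _).trans
      (add_le_add (abs_integral_sub_le_FK hK hf) (abs_integral_sub_le_FK hK hf))

lemma abs_FK_sub_FK_le : |FK K μ ρ - FK K ν ρ| ≤ FK K μ ν := by
  have h₁ := FK_le_add (μ := μ) (ν := ν) (ρ := ρ) hK
  have h₂ := FK_le_add (μ := ν) (ν := μ) (ρ := ρ) hK
  rw [FK_comm (μ := ν) (ν := μ)] at h₂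
  exact abs_sub_le_iff.2 ⟨by linarith, by linarith⟩

lemma FK_ofReal_smul_le {a b : ℝ} (ha : 0 ≤ a) (hb : 0 ≤ b) :
    FK K (ENNReal.ofReal a • μ) (ENNReal.ofReal b • ν) ≤ a * FK K μ ν + |a - b| * FK K ν 0 := by
  refine FK_le_of_forall
    (add_nonneg (mul_nonneg ha FK_nonneg) (mul_nonneg (abs_nonneg _) FK_nonneg)) fun f hf => ?_
  have h₁ := abs_integral_sub_le_FK (μ := μ) (ν := ν) hK hf
  have h₂ := abs_integral_sub_le_FK (μ := ν) (ν := 0) hK hf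
  rw [integral_zero_measure, sub_zero] at h₂
  rw [integral_smul_measure, integral_smul_measure, ENNReal.toReal_ofReal ha,
    ENNReal.toReal_ofReal hb, smul_eq_mul, smul_eq_mul]
  calc |a * ∫ x, f x ∂μ - b * ∫ x, f x ∂ν|
      = |a * (∫ x, f x ∂μ - ∫ x, f x ∂ν) + (a - b) * ∫ x, f x ∂ν| := by ring_nf
    _ ≤ a * |∫ x, f x ∂μ - ∫ x, f x ∂ν| + |a - b| * |∫ x, f x ∂ν| := by
      rw [← abs_of_nonneg ha, ← abs_mul, ← abs_mul, abs_of_nonneg ha]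
      exact abs_add_le _ _
    _ ≤ a * FK K μ ν + |a - b| * FK K ν 0 := by gcongr

end FK

section WeakStar

variable {n : ℕ} {νi : ℕ → Measure (EuclideanSpace ℝ (Fin n))}
  {ν : Measure (EuclideanSpace ℝ (Fin n))} (hνi : ∀ i, IsLocallyFiniteMeasure (νi i))
  [IsLocallyFiniteMeasure ν] (hconv : WeakStarTendsto νi ν) {K : Set (EuclideanSpace ℝ (Fin n))}
  (hK : IsCompact K)
include hνi hconv hK

lemma exists_measureReal_le_of_weakStarTendsto :
    ∃ C, ν.real K ≤ C ∧ ∀ᶠ i in atTop, (νi i).real K ≤ C := by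
  obtain ⟨φ, hφK, -, hφc, hφ01⟩ :=
    exists_continuous_one_zero_of_isCompact hK isClosed_empty (disjoint_empty K)
  have mass_le : ∀ (μ : Measure (EuclideanSpace ℝ (Fin n))) [IsLocallyFiniteMeasure μ],
      μ.real K ≤ ∫ x, φ x ∂μ :=
    fun μ _ => measureReal_le_integral_of_eqOn_one hK
      (φ.continuous.integrable_of_hasCompactSupport hφc) (fun x => (hφ01 x).1) hφK
  refine ⟨∫ x, φ x ∂ν + 1, (mass_le ν).trans (le_add_of_nonneg_right zero_le_one), ?_⟩
  filter_upwards [(hconv φ φ.continuous hφc).eventually (eventually_lt_nhds (lt_add_one _))]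
    with i hi
  have := hνi i
  exact (mass_le (νi i)).trans hi.le

theorem tendsto_FK_of_weakStarTendsto [NeZero n] :
    Tendsto (fun i => FK K (νi i) ν) atTop (𝓝 0) := by
  obtain ⟨C, hνC, hνiC⟩ := exists_measureReal_le_of_weakStarTendsto hνi hconv hK
  have hC : 0 ≤ C := measureReal_nonneg.trans hνC
  refine tendsto_order.2 ⟨fun a ha => Eventually.of_forall fun i => ha.trans_le FK_nonneg,
    fun ε hε => ?_⟩
  set δ := ε / (2 * C + 2)
  have hδ : 0 < δ := by positivity
  have hδε : δ * C + δ + δ * C < ε := by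
    have : δ * (2 * C + 2) = ε := div_mul_cancel₀ _ (by positivity)
    nlinarith
  obtain ⟨t, htK, ht, happrox⟩ := exists_finite_net_lipTestFns hK hδ
  have hnet : ∀ᶠ i in atTop, ∀ g ∈ t, |∫ x, g x ∂νi i - ∫ x, g x ∂ν| < δ :=
    ht.eventually_all.2 fun g hg => by
      simpa [Real.dist_eq] using
        (hconv g (htK hg).1 (htK hg).2.2.1).eventually (ball_mem_nhds _ hδ)
  filter_upwards [hνiC, hnet] with i hiC hinet
  have := hνi i
  refine (FK_le_of_forall (by positivity) fun f hf => ?_).trans_lt hδε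
  obtain ⟨g, hg, hfg⟩ := happrox f hf
  have hfg' : ∀ x, |f x - g x| ≤ δ := fun x => (hfg x).le
  have h₁ := abs_integral_sub_integral_le (μ := νi i) hK hf (htK hg) hfg'
  have h₂ := abs_integral_sub_integral_le (μ := ν) hK hf (htK hg) hfg'
  calc |∫ x, f x ∂νi i - ∫ x, f x ∂ν|
      ≤ |∫ x, f x ∂νi i - ∫ x, g x ∂νi i| + |∫ x, g x ∂νi i - ∫ x, g x ∂ν|
        + |∫ x, f x ∂ν - ∫ x, g x ∂ν| := by
        rw [abs_sub_comm (∫ x, f x ∂ν), add_assoc]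
        exact (abs_sub_le _ _ _).trans (add_le_add le_rfl (abs_sub_le _ _ _))
    _ ≤ δ * C + δ + δ * C := by
        gcongr
        · exact h₁.trans (mul_le_mul_of_nonneg_left hiC hδ.le)
        · exact (hinet g hg).le
        · exact h₂.trans (mul_le_mul_of_nonneg_left hνC hδ.le)

end WeakStar

section DCone

variable {n : ℕ} {s : ℝ} {M : Set (Measure (EuclideanSpace ℝ (Fin n)))}
  {μ ν : Measure (EuclideanSpace ℝ (Fin n))}

lemma dCone_eq_sInf (h : 0 < Fb s ν) :
    dCone s ν M = sInf (Fr s (ENNReal.ofReal (Fb s ν)⁻¹ • ν) '' {μ ∈ M | Fb s μ = 1}) := by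
  rw [dCone, if_neg h.ne', ENNReal.ofReal_inv_of_pos h]
  congr 1
  ext d
  constructor
  · rintro ⟨μ, hμ, h1, rfl⟩
    exact ⟨μ, ⟨hμ, h1⟩, rfl⟩
  · rintro ⟨μ, ⟨hμ, h1⟩, rfl⟩
    exact ⟨μ, hμ, h1, rfl⟩

lemma abs_dCone_sub_dCone_le [NeZero n] (hM : ∀ μ ∈ M, IsLocallyFiniteMeasure μ)
    [IsLocallyFiniteMeasure μ] [IsLocallyFiniteMeasure ν] (hμ : 0 < Fb s μ) (hν : 0 < Fb s ν) :
    |dCone s μ M - dCone s ν M| ≤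
      (Fb s μ)⁻¹ * Fr s μ ν + |(Fb s μ)⁻¹ - (Fb s ν)⁻¹| * Fb s ν := by
  have hK := isCompact_closedBall (0 : EuclideanSpace ℝ (Fin n)) s
  have hnorm : Fr s (ENNReal.ofReal (Fb s μ)⁻¹ • μ) (ENNReal.ofReal (Fb s ν)⁻¹ • ν) ≤
      (Fb s μ)⁻¹ * Fr s μ ν + |(Fb s μ)⁻¹ - (Fb s ν)⁻¹| * Fb s ν :=
    FK_ofReal_smul_le hK (inv_nonneg.2 hμ.le) (inv_nonneg.2 hν.le)
  rw [dCone_eq_sInf hμ, dCone_eq_sInf hν]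
  refine abs_sInf_image_sub_sInf_image_le (FK_nonneg.trans hnorm)
    ⟨0, forall_mem_image.2 fun _ _ => FK_nonneg⟩ ⟨0, forall_mem_image.2 fun _ _ => FK_nonneg⟩
    fun ρ hρ => ?_
  have := hM ρ hρ.1
  exact (abs_FK_sub_FK_le hK).trans hnorm

end DCone

theorem dCone_tendsto_of_weakStar_general {n : ℕ}
    (M : Set (Measure (EuclideanSpace ℝ (Fin n)))) (hM : IsDCone M) (s : ℝ)
    (νi : ℕ → Measure (EuclideanSpace ℝ (Fin n))) (ν : Measure (EuclideanSpace ℝ (Fin n)))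
    (hνi : ∀ i, IsLocallyFiniteMeasure (νi i)) (hν : IsLocallyFiniteMeasure ν)
    (hconv : WeakStarTendsto νi ν) (hFs : 0 < Fb s ν) :
    Tendsto (fun i => dCone s (νi i) M) atTop (𝓝 (dCone s ν M)) := by
  have : NeZero n := ⟨by rintro rfl; exact hFs.ne' FK_eq_zero_of_subsingleton⟩
  have hK := isCompact_closedBall (0 : EuclideanSpace ℝ (Fin n)) s
  have hFr : Tendsto (fun i => Fr s (νi i) ν) atTop (𝓝 0) :=
    tendsto_FK_of_weakStarTendsto hνi hconv hK
  have hFb : Tendsto (fun i => Fb s (νi i)) atTop (𝓝 (Fb s ν)) :=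
    tendsto_iff_dist_tendsto_zero.2 <| squeeze_zero (fun _ => dist_nonneg)
      (fun i => by have := hνi i; exact (Real.dist_eq _ _).trans_le (abs_FK_sub_FK_le hK)) hFr
  have hbound : Tendsto (fun i => (Fb s (νi i))⁻¹ * Fr s (νi i) ν +
      |(Fb s (νi i))⁻¹ - (Fb s ν)⁻¹| * Fb s ν) atTop (𝓝 0) := by
    have hinv := hFb.inv₀ hFs.ne'
    simpa using (hinv.mul hFr).add ((hinv.sub_const (Fb s ν)⁻¹).abs.mul_const (Fb s ν))
  refine tendsto_iff_dist_tendsto_zero.2 <|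
    squeeze_zero' (Eventually.of_forall fun _ => dist_nonneg) ?_ hbound
  filter_upwards [hFb.eventually (eventually_gt_nhds hFs)] with i hi
  have := hνi i
  exact (Real.dist_eq _ _).trans_le
    (abs_dCone_sub_dCone_le (fun μ hμ => (hM.1 μ hμ).2) hi hFs)

/-- If `ν_i → ν` weak-* and `F_s(ν) > 0`, then `d_s(ν_i, M) → d_s(ν, M)`. -/
theorem dCone_tendsto_of_weakStar {n : ℕ}
    (M : Set (Measure (EuclideanSpace ℝ (Fin n)))) (hM : IsDCone M) (s : ℝ) (hs : 0 < s)
    (νi : ℕ → Measure (EuclideanSpace ℝ (Fin n))) (ν : Measure (EuclideanSpace ℝ (Fin n)))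
    (hνi : ∀ i, IsLocallyFiniteMeasure (νi i)) (hν : IsLocallyFiniteMeasure ν)
    (hconv : WeakStarTendsto νi ν) (hFs : 0 < Fb s ν) :
    Tendsto (fun i => dCone s (νi i) M) atTop (𝓝 (dCone s ν M)) :=
  dCone_tendsto_of_weakStar_general M hM s νi ν hνi hν hconv hFs
end

section
/- Let n ≥ 1, let ν ∈ ℝⁿ be a unit vector, let α, β > 0, and set P(x) = α(x·ν)⁺ − β(x·ν)⁻. Let x₀ ∈ ℝⁿ and let u : ℝⁿ → ℝ be continuous with lim_{x→x₀} |u(x) − P(x−x₀)| / |x−x₀| = 0. Then for every N > 0, as r ↓ 0, |({u > 0} Δ (x₀ + {P > 0})) ∩ B(x₀, rN)| / |B(x₀, rN)| → 0 and |({u < 0} Δ (x₀ + {P < 0})) ∩ B(x₀, rN)| / |B(x₀, rN)| → 0. -/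
open MeasureTheory Metric Filter Topology Set Pointwise

/-! Where the signs of `u` and of the translated `P` disagree, `|P (x - x₀)| ≤ |u x - P (x - x₀)|`,
and `|P y| ≥ min α β * |y·ν|`. So in `B(x₀, ρ)`, for small `ρ`, both symmetric differences lie in
`x₀ + ρ • (B(0,1) ∩ {|y·ν| ≤ δ})`, and by scaling their relative measure is at most that of this
slab in the unit ball, which tends to `0` with `δ` because the hyperplane `ν⊥` is Lebesgue-null. -/

lemma abs_le_abs_sub_of_xor_pos {a b : ℝ} (h : Xor (0 < a) (0 < b)) : |b| ≤ |a - b| := by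
  rcases h with ⟨ha, hb⟩ | ⟨hb, ha⟩
  · rw [abs_of_nonpos (not_lt.1 hb), abs_of_pos (by linarith)]; linarith
  · rw [abs_of_pos hb, abs_sub_comm, abs_of_pos (by linarith)]; linarith

lemma min_mul_abs_le_abs_mul_max_sub_mul_max {α β : ℝ} (hα : 0 ≤ α) (hβ : 0 ≤ β) (a : ℝ) :
    min α β * |a| ≤ |α * max a 0 - β * max (-a) 0| := by
  rcases le_total 0 a with ha | ha
  · rw [max_eq_left ha, max_eq_right (neg_nonpos.2 ha), mul_zero, sub_zero, abs_mul,
      abs_of_nonneg hα]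
    exact mul_le_mul_of_nonneg_right (min_le_left α β) (abs_nonneg a)
  · rw [max_eq_right ha, max_eq_left (neg_nonneg.2 ha), mul_zero, zero_sub, abs_neg, abs_mul,
      abs_of_nonneg hβ, abs_neg]
    exact mul_le_mul_of_nonneg_right (min_le_right α β) (abs_nonneg a)

section Slab

variable {E : Type*} [NormedAddCommGroup E] [InnerProductSpace ℝ E]

def slab (ν : E) (δ : ℝ) : Set E := {x | |inner ℝ x ν| ≤ δ}

lemma measurableSet_slab [MeasurableSpace E] [OpensMeasurableSpace E] (ν : E) (δ : ℝ) :
    MeasurableSet (slab ν δ) :=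
  (isClosed_le (continuous_id.inner continuous_const).abs continuous_const).measurableSet

variable [FiniteDimensional ℝ E] [MeasurableSpace E] [BorelSpace E] (μ : Measure E)
  [μ.IsAddHaarMeasure]

lemma tendsto_measure_ball_inter_slab {ν : E} (hν : ν ≠ 0) :
    Tendsto (fun δ => μ (ball 0 1 ∩ slab ν δ)) (𝓝[>] 0) (𝓝 0) := by
  have hker : LinearMap.ker (innerSL ℝ ν : E →ₗ[ℝ] ℝ) ≠ ⊤ := fun h => by
    have : inner ℝ ν ν = (0 : ℝ) := (LinearMap.mem_ker.1 (h ▸ Submodule.mem_top : ν ∈ _))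
    exact hν (inner_self_eq_zero.1 this)
  have hnull : μ (⋂ δ > 0, ball 0 1 ∩ slab ν δ) = 0 := by
    refine measure_mono_null (fun x hx => ?_) (Measure.addHaar_submodule μ _ hker)
    have hδ : ∀ δ > (0 : ℝ), |inner ℝ x ν| ≤ δ := fun δ hδ => (mem_iInter₂.1 hx δ hδ).2
    change inner ℝ ν x = (0 : ℝ)
    rw [real_inner_comm, ← abs_nonpos_iff]
    exact le_of_forall_pos_le_add fun δ hδ' => by simpa using hδ δ hδ'
  have h := tendsto_measure_biInter_gt (μ := μ) (s := fun δ => ball (0 : E) 1 ∩ slab ν δ)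
    (fun δ _ => (measurableSet_ball.inter (measurableSet_slab ν δ)).nullMeasurableSet)
    (fun δ δ' _ hδδ' => inter_subset_inter_right _ fun x (hx : _ ≤ δ) => hx.trans hδδ')
    ⟨1, one_pos, (measure_mono inter_subset_left |>.trans_lt measure_ball_lt_top).ne⟩
  rwa [hnull] at h

lemma measure_inter_ball_div_le_of_abs_inner_sub_le {ν : E} {δ ρ : ℝ} (hρ : 0 < ρ) {x₀ : E}
    {A : Set E}
    (hA : ∀ x ∈ A ∩ ball x₀ ρ, |inner ℝ (x - x₀) ν| ≤ δ * ρ) :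
    μ (A ∩ ball x₀ ρ) / μ (ball x₀ ρ) ≤ μ (ball 0 1 ∩ slab ν δ) / μ (ball 0 1) := by
  have hsub : A ∩ ball x₀ ρ ⊆ x₀ +ᵥ ρ • (ball 0 1 ∩ slab ν δ) := by
    intro x hx
    refine ⟨x - x₀, ⟨ρ⁻¹ • (x - x₀), ⟨?_, ?_⟩, smul_inv_smul₀ hρ.ne' _⟩, add_sub_cancel x₀ x⟩
    · rw [mem_ball_zero_iff, norm_smul, Real.norm_eq_abs, abs_inv, abs_of_pos hρ,
        inv_mul_lt_iff₀ hρ, mul_one, ← dist_eq_norm]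
      exact hx.2
    · change |inner ℝ (ρ⁻¹ • (x - x₀)) ν| ≤ δ
      rw [real_inner_smul_left, abs_mul, abs_inv, abs_of_pos hρ, inv_mul_le_iff₀ hρ, mul_comm]
      exact hA x hx
  have hc : ENNReal.ofReal (ρ ^ Module.finrank ℝ E) ≠ 0 := by simpa using pow_pos hρ _
  calc μ (A ∩ ball x₀ ρ) / μ (ball x₀ ρ)
      ≤ μ (x₀ +ᵥ ρ • (ball 0 1 ∩ slab ν δ)) / μ (ball x₀ ρ) := by gcongr
    _ = μ (ball 0 1 ∩ slab ν δ) / μ (ball 0 1) := by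
      rw [measure_vadd, Measure.addHaar_smul_of_nonneg μ hρ.le,
        Measure.addHaar_ball_of_pos μ x₀ hρ, ENNReal.mul_div_mul_left _ _ hc ENNReal.ofReal_ne_top]

theorem tendsto_measure_symmDiff_pos_inter_ball_div {ν : E} (hν : ν ≠ 0) {c : ℝ} (hc : 0 < c)
    {g : E → ℝ} (hg : ∀ y, c * |inner ℝ y ν| ≤ |g y|) {u : E → ℝ} {x₀ : E}
    (hlim : Tendsto (fun x => |u x - g (x - x₀)| / ‖x - x₀‖) (𝓝[≠] x₀) (𝓝 0)) :
    Tendsto (fun ρ => μ (symmDiff {x | 0 < u x} {x | 0 < g (x - x₀)} ∩ ball x₀ ρ)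
      / μ (ball x₀ ρ)) (𝓝[>] 0) (𝓝 0) := by
  have hslab := ENNReal.Tendsto.div_const (tendsto_measure_ball_inter_slab μ hν)
    (Or.inr (measure_ball_pos μ 0 one_pos).ne')
  rw [ENNReal.zero_div] at hslab
  refine ENNReal.tendsto_nhds_zero.2 fun ε hε => ?_
  obtain ⟨δ, hδε, hδ⟩ :=
    ((hslab.eventually (ge_mem_nhds hε)).and self_mem_nhdsWithin).exists
  obtain ⟨R, hR, hRlim⟩ := Metric.mem_nhdsWithin_iff.1 (hlim (gt_mem_nhds (mul_pos hc hδ)))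
  filter_upwards [Ioo_mem_nhdsGT hR] with ρ ⟨hρ, hρR⟩
  refine (measure_inter_ball_div_le_of_abs_inner_sub_le μ hρ fun x ⟨hx, hxρ⟩ => ?_).trans hδε
  rcases eq_or_ne x x₀ with rfl | hxx₀
  · simp [mul_nonneg hδ.le hρ.le]
  have hd : 0 < ‖x - x₀‖ := norm_pos_iff.2 (sub_ne_zero.2 hxx₀)
  have hdρ : ‖x - x₀‖ < ρ := by rwa [← dist_eq_norm]
  have hsmall : |u x - g (x - x₀)| < c * δ * ‖x - x₀‖ :=
    (div_lt_iff₀ hd).1 (hRlim ⟨(mem_ball.1 hxρ).trans hρR, hxx₀⟩)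
  refine le_of_mul_le_mul_left ?_ hc
  calc c * |inner ℝ (x - x₀) ν| ≤ |g (x - x₀)| := hg _
    _ ≤ |u x - g (x - x₀)| := abs_le_abs_sub_of_xor_pos hx
    _ ≤ c * (δ * ρ) := by rw [← mul_assoc]; exact hsmall.le.trans (by gcongr)

end Slab

theorem phase_convergence_of_blowup_general {n : ℕ}
    (ν : EuclideanSpace ℝ (Fin n)) (hν : ‖ν‖ = 1) (α β : ℝ) (hα : 0 < α) (hβ : 0 < β)
    (x₀ : EuclideanSpace ℝ (Fin n)) (u : EuclideanSpace ℝ (Fin n) → ℝ)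
    (P : EuclideanSpace ℝ (Fin n) → ℝ)
    (hP : P = fun x => α * max (inner ℝ x ν : ℝ) 0 - β * max (-(inner ℝ x ν : ℝ)) 0)
    (hlim : Tendsto (fun x => |u x - P (x - x₀)| / ‖x - x₀‖) (𝓝[≠] x₀) (𝓝 0)) :
    ∀ N : ℝ, 0 < N →
      Tendsto (fun r =>
          volume (symmDiff {x | 0 < u x} ((fun y => x₀ + y) '' {x | 0 < P x}) ∩ ball x₀ (r * N))
            / volume (ball x₀ (r * N))) (𝓝[>] (0:ℝ)) (𝓝 0) ∧
      Tendsto (fun r =>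
          volume (symmDiff {x | u x < 0} ((fun y => x₀ + y) '' {x | P x < 0}) ∩ ball x₀ (r * N))
            / volume (ball x₀ (r * N))) (𝓝[>] (0:ℝ)) (𝓝 0) := by
  intro N hN
  have hν0 : ν ≠ 0 := by rintro rfl; simp at hν
  have hPlow : ∀ y, min α β * |inner ℝ y ν| ≤ |P y| := fun y => by
    rw [hP]; exact min_mul_abs_le_abs_mul_max_sub_mul_max hα.le hβ.le _
  have hscale : Tendsto (fun r : ℝ => r * N) (𝓝[>] 0) (𝓝[>] 0) :=
    tendsto_nhdsWithin_of_tendsto_nhds_of_eventually_within _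
      (((continuous_mul_const N).tendsto' 0 0 (zero_mul N)).mono_left nhdsWithin_le_nhds)
      (eventually_nhdsWithin_of_forall fun r hr => mul_pos hr hN)
  have htranslate : ∀ p : ℝ → Prop,
      (fun y => x₀ + y) '' {x | p (P x)} = {x | p (P (x - x₀))} := fun p => by
    ext x; simp [neg_add_eq_sub]
  rw [htranslate (0 < ·), htranslate (· < 0)]
  constructor
  · exact (tendsto_measure_symmDiff_pos_inter_ball_div volume hν0 (lt_min hα hβ) hPlow hlim).comp
      hscale
  · have hneg := tendsto_measure_symmDiff_pos_inter_ball_div volume hν0 (lt_min hα hβ)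
      (g := fun y => -P y) (u := fun x => -u x) (by simpa using hPlow)
      (hlim.congr fun x => by rw [neg_sub_neg, abs_sub_comm])
    simpa only [neg_pos, Function.comp_def] using hneg.comp hscale

/-- Blow-up convergence of phases: if a continuous `u` is approximated at `x₀` at first order
by the two-plane function `P(x) = α(x·ν)⁺ − β(x·ν)⁻` (with `α, β > 0` and `ν` a unit vector),
then the relative Lebesgue measure, in balls `B(x₀, rN)`, of the symmetric differences between
the positivity (resp. negativity) sets of `u` and of the translate of `P` tends to `0` as
`r ↓ 0`, for every `N > 0`. -/
theorem phase_convergence_of_blowup {n : ℕ} (hn : 1 ≤ n)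
    (ν : EuclideanSpace ℝ (Fin n)) (hν : ‖ν‖ = 1) (α β : ℝ) (hα : 0 < α) (hβ : 0 < β)
    (x₀ : EuclideanSpace ℝ (Fin n)) (u : EuclideanSpace ℝ (Fin n) → ℝ) (hu : Continuous u)
    (P : EuclideanSpace ℝ (Fin n) → ℝ)
    (hP : P = fun x => α * max (inner ℝ x ν : ℝ) 0 - β * max (-(inner ℝ x ν : ℝ)) 0)
    (hlim : Tendsto (fun x => |u x - P (x - x₀)| / ‖x - x₀‖) (𝓝[≠] x₀) (𝓝 0)) :
    ∀ N : ℝ, 0 < N →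
      Tendsto (fun r =>
          volume (symmDiff {x | 0 < u x} ((fun y => x₀ + y) '' {x | 0 < P x}) ∩ ball x₀ (r * N))
            / volume (ball x₀ (r * N))) (𝓝[>] (0:ℝ)) (𝓝 0) ∧
      Tendsto (fun r =>
          volume (symmDiff {x | u x < 0} ((fun y => x₀ + y) '' {x | P x < 0}) ∩ ball x₀ (r * N))
            / volume (ball x₀ (r * N))) (𝓝[>] (0:ℝ)) (𝓝 0) :=
  phase_convergence_of_blowup_general ν hν α β hα hβ x₀ u P hP hlim
end

section
/- Let n ≥ 1, Λ₀ ≥ 1, and let M be a Λ₀-elliptic symmetric n×n real matrix. For a measurable function w : ℝⁿ → ℝ set A_w(x) = Id if w(x) > 0 and A_w(x) = M if w(x) ≤ 0. Let u_k (k ∈ ℕ) and P be locally integrable functions on ℝⁿ with distributional gradients g_k and g, all in L²_loc(ℝⁿ; ℝⁿ). Assume: (i) for every k and every φ ∈ C_c^∞(ℝⁿ), ∫ ⟨A_{u_k}(x) g_k(x), ∇φ(x)⟩ dx = 0; (ii) for every N ∈ ℕ, g_k → g weakly in L²(B_N; ℝⁿ); (iii) for every N ∈ ℕ, the Lebesgue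 measure of ({u_k > 0} Δ {P > 0}) ∩ B_N tends to 0 as k → ∞. Then for every φ ∈ C_c^∞(ℝⁿ), ∫ ⟨A_P(x) g(x), ∇φ(x)⟩ dx = 0. -/
open MeasureTheory Metric Filter Topology Set

/-- The divergence of a vector field `Φ : ℝⁿ → ℝⁿ`: the trace of its Fréchet derivative. -/
noncomputable def divg {n : ℕ} (Φ : EuclideanSpace ℝ (Fin n) → EuclideanSpace ℝ (Fin n))
    (x : EuclideanSpace ℝ (Fin n)) : ℝ :=
  LinearMap.trace ℝ (EuclideanSpace ℝ (Fin n)) (fderiv ℝ Φ x).toLinearMap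

/-- `g` is the distributional gradient of `u`: `∫ u div Φ = −∫ g·Φ` for every smooth
compactly supported vector field `Φ`. -/
def HasDistribGrad {n : ℕ} (u : EuclideanSpace ℝ (Fin n) → ℝ)
    (g : EuclideanSpace ℝ (Fin n) → EuclideanSpace ℝ (Fin n)) : Prop :=
  ∀ Φ : EuclideanSpace ℝ (Fin n) → EuclideanSpace ℝ (Fin n),
    ContDiff ℝ (⊤ : ℕ∞) Φ → HasCompactSupport Φ →
      (∫ x, u x * divg Φ x) = - ∫ x, (inner ℝ (g x) (Φ x) : ℝ)

/-- If `w` is a.e. measurable and `f₁, f₂` are strongly measurable, then the function equal to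
`f₁` on `{w > 0}` and `f₂` elsewhere is a.e. strongly measurable. -/
lemma aesm_ite_pos {α E : Type*} [MeasurableSpace α] [TopologicalSpace E]
    {μ : MeasureTheory.Measure α} {w : α → ℝ} (hw : AEMeasurable w μ)
    {f₁ f₂ : α → E} (h₁ : StronglyMeasurable f₁) (h₂ : StronglyMeasurable f₂) :
    AEStronglyMeasurable (fun x => if 0 < w x then f₁ x else f₂ x) μ := by
  classical
  have hs : NullMeasurableSet {x | 0 < w x} μ :=
    hw.nullMeasurable measurableSet_Ioi
  have hmeas : StronglyMeasurable ((toMeasurable μ {x | 0 < w x}).piecewise f₁ f₂) :=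
    h₁.piecewise (measurableSet_toMeasurable _ _) h₂
  refine hmeas.aestronglyMeasurable.congr ?_
  filter_upwards [Filter.eventuallyEq_set.mp hs.toMeasurable_ae_eq] with x hx
  by_cases hc : 0 < w x
  · rw [Set.piecewise_eq_of_mem _ _ _ (hx.mpr hc), if_pos hc]
  · rw [Set.piecewise_eq_of_notMem _ _ _ (fun h => hc (hx.mp h)), if_neg hc]

set_option maxHeartbeats 2000000 in
/-- Stability of the two-phase equation under weak `L²` convergence of gradients and `L¹`
convergence of phases: if `−div(A_{u_k} g_k) = 0` weakly for each `k`, `g_k → g` weakly in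
`L²(B_N)` for every `N`, and `|({u_k > 0} Δ {P > 0}) ∩ B_N| → 0` for every `N`, then
`−div(A_P g) = 0` weakly. Here `A_w(x) = Id` where `w(x) > 0` and `A_w(x) = M` where
`w(x) ≤ 0`, for a `Λ₀`-elliptic symmetric matrix `M`. -/
theorem weak_limit_two_phase_equation {n : ℕ} (hn : 1 ≤ n) (Λ₀ : ℝ) (hΛ₀ : 1 ≤ Λ₀)
    (M : EuclideanSpace ℝ (Fin n) →L[ℝ] EuclideanSpace ℝ (Fin n))
    (hsym : ∀ x y : EuclideanSpace ℝ (Fin n), (inner ℝ (M x) y : ℝ) = (inner ℝ x (M y) : ℝ))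
    (hell : ∀ ξ : EuclideanSpace ℝ (Fin n),
      Λ₀⁻¹ * ‖ξ‖ ^ 2 ≤ (inner ℝ ξ (M ξ) : ℝ) ∧ (inner ℝ ξ (M ξ) : ℝ) ≤ Λ₀ * ‖ξ‖ ^ 2)
    (u : ℕ → EuclideanSpace ℝ (Fin n) → ℝ) (P : EuclideanSpace ℝ (Fin n) → ℝ)
    (g : ℕ → EuclideanSpace ℝ (Fin n) → EuclideanSpace ℝ (Fin n))
    (G : EuclideanSpace ℝ (Fin n) → EuclideanSpace ℝ (Fin n))
    (huloc : ∀ k, LocallyIntegrable (u k) volume) (hPloc : LocallyIntegrable P volume)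
    (hgrad : ∀ k, HasDistribGrad (u k) (g k)) (hGrad : HasDistribGrad P G)
    (hgL2 : ∀ k, ∀ N : ℕ, MemLp (g k) 2 (volume.restrict (ball (0 : EuclideanSpace ℝ (Fin n)) N)))
    (hGL2 : ∀ N : ℕ, MemLp G 2 (volume.restrict (ball (0 : EuclideanSpace ℝ (Fin n)) N)))
    (hsol : ∀ k, ∀ φ : EuclideanSpace ℝ (Fin n) → ℝ, ContDiff ℝ (⊤ : ℕ∞) φ → HasCompactSupport φ →
      (∫ x, (inner ℝ (if 0 < u k x then g k x else M (g k x)) (gradient φ x) : ℝ)) = 0)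
    (hweak : ∀ N : ℕ, ∀ v : EuclideanSpace ℝ (Fin n) → EuclideanSpace ℝ (Fin n),
      MemLp v 2 (volume.restrict (ball (0 : EuclideanSpace ℝ (Fin n)) N)) →
      Tendsto (fun k => ∫ x in ball (0 : EuclideanSpace ℝ (Fin n)) N, (inner ℝ (g k x) (v x) : ℝ))
        atTop (𝓝 (∫ x in ball (0 : EuclideanSpace ℝ (Fin n)) N, (inner ℝ (G x) (v x) : ℝ))))
    (hphase : ∀ N : ℕ,
      Tendsto (fun k =>
          volume (symmDiff {x | 0 < u k x} {x | 0 < P x} ∩ ball (0 : EuclideanSpace ℝ (Fin n)) N))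
        atTop (𝓝 0)) :
    ∀ φ : EuclideanSpace ℝ (Fin n) → ℝ, ContDiff ℝ (⊤ : ℕ∞) φ → HasCompactSupport φ →
      (∫ x, (inner ℝ (if 0 < P x then G x else M (G x)) (gradient φ x) : ℝ)) = 0 := by
  classical
  intro φ hφ hφc
  -- gradient of φ: compact support, continuous, bounded
  have hgrad_eq : gradient φ =
      (fun v => (InnerProductSpace.toDual ℝ (EuclideanSpace ℝ (Fin n))).symm v) ∘ (fderiv ℝ φ) := rfl
  have hdφc : HasCompactSupport (gradient φ) := by
    rw [hgrad_eq]
    exact (hφc.fderiv (𝕜 := ℝ)).comp_left (map_zero _)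
  have hdφcont : Continuous (gradient φ) := by
    rw [hgrad_eq]
    exact (LinearIsometryEquiv.continuous _).comp (hφ.continuous_fderiv (by simp))
  obtain ⟨Cφ, hCφ⟩ := hdφc.exists_bound_of_continuous hdφcont
  have hCφ0 : 0 ≤ Cφ := le_trans (norm_nonneg _) (hCφ 0)
  obtain ⟨r, hr⟩ := hdφc.isBounded.subset_ball 0
  set N : ℕ := ⌈r⌉₊ + 1 with hNdef
  have hsub : tsupport (gradient φ) ⊆ ball (0 : EuclideanSpace ℝ (Fin n)) N := by
    refine hr.trans (ball_subset_ball ?_)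
    calc r ≤ (⌈r⌉₊ : ℝ) := Nat.le_ceil r
    _ ≤ (N : ℝ) := by exact_mod_cast Nat.le_succ _
  have hdφ0 : ∀ x ∉ ball (0 : EuclideanSpace ℝ (Fin n)) N, gradient φ x = 0 := fun x hx =>
    image_eq_zero_of_notMem_tsupport (fun h => hx (hsub h))
  set μr := volume.restrict (ball (0 : EuclideanSpace ℝ (Fin n)) N) with hμrdef
  haveI : IsFiniteMeasure μr := ⟨by
    rw [hμrdef, Measure.restrict_apply_univ]; exact measure_ball_lt_top⟩
  -- the test vector fields
  set b : EuclideanSpace ℝ (Fin n) → EuclideanSpace ℝ (Fin n) := fun x => if 0 < P x then gradient φ x else M (gradient φ x) with hbdef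
  set a : ℕ → EuclideanSpace ℝ (Fin n) → EuclideanSpace ℝ (Fin n) := fun k x =>
    if 0 < u k x then gradient φ x else M (gradient φ x) with hadef
  set C : ℝ := (1 + ‖M‖) * Cφ with hCdef
  have hC0 : 0 ≤ C := mul_nonneg (by positivity) hCφ0
  have hMb : ∀ x, ‖M (gradient φ x)‖ ≤ C := by
    intro x
    calc ‖M (gradient φ x)‖ ≤ ‖M‖ * ‖gradient φ x‖ := M.le_opNorm _
    _ ≤ (1 + ‖M‖) * Cφ := by nlinarith [norm_nonneg M, hCφ x, norm_nonneg (gradient φ x)]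
  have hIb : ∀ x, ‖gradient φ x‖ ≤ C := by
    intro x
    calc ‖gradient φ x‖ ≤ Cφ := hCφ x
    _ ≤ (1 + ‖M‖) * Cφ := by nlinarith [norm_nonneg M]
  have hbbd : ∀ x, ‖b x‖ ≤ C := by
    intro x; rw [hbdef]; dsimp only
    split_ifs; exacts [hIb x, hMb x]
  have habd : ∀ k x, ‖a k x‖ ≤ C := by
    intro k x; rw [hadef]; dsimp only
    split_ifs; exacts [hIb x, hMb x]
  have hsmooth : StronglyMeasurable (gradient φ) := hdφcont.stronglyMeasurable
  have hsmoothM : StronglyMeasurable (fun x => M (gradient φ x)) :=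
    (M.continuous.comp hdφcont).stronglyMeasurable
  have hbL2 : MemLp b 2 μr :=
    MemLp.of_bound (aesm_ite_pos (hPloc.aestronglyMeasurable.aemeasurable.restrict)
      hsmooth hsmoothM) C (Filter.Eventually.of_forall hbbd)
  have haL2 : ∀ k, MemLp (a k) 2 μr := fun k =>
    MemLp.of_bound (aesm_ite_pos ((huloc k).aestronglyMeasurable.aemeasurable.restrict)
      hsmooth hsmoothM) C (Filter.Eventually.of_forall (habd k))
  -- the functionals
  set T : ℕ → Lp (EuclideanSpace ℝ (Fin n)) 2 μr →L[ℝ] ℝ := fun k => innerSL ℝ ((hgL2 k N).toLp (g k)) with hTdef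
  have hTval' : ∀ k (v : Lp (EuclideanSpace ℝ (Fin n)) 2 μr),
      T k v = ∫ x in ball (0 : EuclideanSpace ℝ (Fin n)) N, (inner ℝ (g k x) (v x) : ℝ) := by
    intro k v
    rw [hTdef]; dsimp only
    rw [innerSL_apply_apply, L2.inner_def]
    refine integral_congr_ae ?_
    filter_upwards [(hgL2 k N).coeFn_toLp] with x h1
    rw [h1]
  have hTval : ∀ k (v : EuclideanSpace ℝ (Fin n) → EuclideanSpace ℝ (Fin n)) (hv : MemLp v 2 μr),
      T k (hv.toLp v) = ∫ x in ball (0 : EuclideanSpace ℝ (Fin n)) N, (inner ℝ (g k x) (v x) : ℝ) := by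
    intro k v hv
    rw [hTval' k (hv.toLp v)]
    refine integral_congr_ae ?_
    filter_upwards [hv.coeFn_toLp] with x h2
    rw [h2]
  -- uniform boundedness
  obtain ⟨C', hC'⟩ : ∃ C', ∀ k, ‖T k‖ ≤ C' := by
    apply banach_steinhaus
    intro v
    have hconv := hweak N v (Lp.memLp v)
    have hconv' : Tendsto (fun k => ‖T k v‖) atTop
        (𝓝 ‖∫ x in ball (0 : EuclideanSpace ℝ (Fin n)) N, (inner ℝ (G x) (v x) : ℝ)‖) := by
      simp only [hTval']
      exact hconv.norm
    obtain ⟨C0, hC0'⟩ := hconv'.bddAbove_range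
    exact ⟨C0, fun k => hC0' (Set.mem_range_self k)⟩
  -- the solution property in terms of `a`
  have hsol' : ∀ k, (∫ x in ball (0 : EuclideanSpace ℝ (Fin n)) N, (inner ℝ (g k x) (a k x) : ℝ)) = 0 := by
    intro k
    have h0 := hsol k φ hφ hφc
    rw [setIntegral_eq_integral_of_forall_compl_eq_zero (fun x hx => ?_)]
    · rw [← h0]
      refine integral_congr_ae (Filter.Eventually.of_forall fun x => ?_)
      rw [hadef]; dsimp only
      by_cases hc : 0 < u k x
      · rw [if_pos hc, if_pos hc]
      · rw [if_neg hc, if_neg hc, hsym]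
    · rw [hadef]; dsimp only
      rw [hdφ0 x hx]
      split_ifs <;> simp
  -- the target in terms of `b`
  have htarget : (∫ x, (inner ℝ (if 0 < P x then G x else M (G x)) (gradient φ x) : ℝ))
      = ∫ x in ball (0 : EuclideanSpace ℝ (Fin n)) N, (inner ℝ (G x) (b x) : ℝ) := by
    rw [setIntegral_eq_integral_of_forall_compl_eq_zero (fun x hx => ?_)]
    · refine integral_congr_ae (Filter.Eventually.of_forall fun x => ?_)
      rw [hbdef]; dsimp only
      by_cases hc : 0 < P x
      · rw [if_pos hc, if_pos hc]
      · rw [if_neg hc, if_neg hc, hsym]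
    · rw [hbdef]; dsimp only
      rw [hdφ0 x hx]
      split_ifs <;> simp
  -- the error term
  set m : ℕ → ENNReal := fun k =>
    volume (symmDiff {x | 0 < u k x} {x | 0 < P x} ∩ ball (0 : EuclideanSpace ℝ (Fin n)) N) with hmdef
  have hmfin : ∀ k, m k ≠ ⊤ := by
    intro k
    exact ne_top_of_le_ne_top measure_ball_lt_top.ne
      (measure_mono (Set.inter_subset_right))
  have hmr : ∀ k, μr (toMeasurable μr (symmDiff {x | 0 < u k x} {x | 0 < P x})) = m k := by
    intro k
    rw [measure_toMeasurable, hμrdef,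
      Measure.restrict_apply' measurableSet_ball]
  have hptw : ∀ k x, ‖(b - a k) x‖ ≤
      ‖(toMeasurable μr (symmDiff {x | 0 < u k x} {x | 0 < P x})).indicator
        (fun _ => (2 * C : ℝ)) x‖ := by
    intro k x
    by_cases hx : x ∈ toMeasurable μr (symmDiff {x | 0 < u k x} {x | 0 < P x})
    · rw [Set.indicator_of_mem hx]
      have : ‖b x - a k x‖ ≤ 2 * C := by
        calc ‖b x - a k x‖ ≤ ‖b x‖ + ‖a k x‖ := norm_sub_le _ _
        _ ≤ 2 * C := by linarith [hbbd x, habd k x]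
      calc ‖(b - a k) x‖ = ‖b x - a k x‖ := by rw [Pi.sub_apply]
      _ ≤ 2 * C := this
      _ ≤ ‖(2 * C : ℝ)‖ := le_abs_self _
    · rw [Set.indicator_of_notMem hx, norm_zero, Pi.sub_apply]
      have hns : x ∉ symmDiff {x | 0 < u k x} {x | 0 < P x} :=
        fun h => hx (subset_toMeasurable _ _ h)
      rw [Set.mem_symmDiff] at hns
      push_neg at hns
      simp only [Set.mem_setOf_eq] at hns
      have hiff : (0 < u k x) ↔ (0 < P x) := by tauto
      have : b x = a k x := by
        rw [hbdef, hadef]; dsimp only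
        by_cases hc : 0 < P x
        · rw [if_pos hc, if_pos (hiff.mpr hc)]
        · rw [if_neg hc, if_neg (fun h => hc (hiff.mp h))]
      rw [this, sub_self, norm_zero]
  have hele : ∀ k, eLpNorm (b - a k) 2 μr ≤ ‖(2 * C : ℝ)‖₊ * (m k) ^ (1 / (2:ℝ)) := by
    intro k
    calc eLpNorm (b - a k) 2 μr
        ≤ eLpNorm ((toMeasurable μr (symmDiff {x | 0 < u k x} {x | 0 < P x})).indicator
            (fun _ => (2 * C : ℝ))) 2 μr := eLpNorm_mono (hptw k)
    _ = ‖(2 * C : ℝ)‖₊ * (μr (toMeasurable μr (symmDiff {x | 0 < u k x} {x | 0 < P x})))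
          ^ (1 / (2:ENNReal).toReal) :=
        eLpNorm_indicator_const (measurableSet_toMeasurable _ _) two_ne_zero ENNReal.ofNat_ne_top
    _ = ‖(2 * C : ℝ)‖₊ * (m k) ^ (1 / (2:ℝ)) := by
        rw [hmr k]; norm_num
  -- norm of the error term
  have herr : ∀ k, ‖T k (hbL2.toLp b) - T k ((haL2 k).toLp (a k))‖
      ≤ C' * (‖(2 * C : ℝ)‖ * Real.sqrt ((m k).toReal)) := by
    intro k
    rw [← map_sub]
    calc ‖T k (hbL2.toLp b - (haL2 k).toLp (a k))‖
        ≤ ‖T k‖ * ‖hbL2.toLp b - (haL2 k).toLp (a k)‖ := (T k).le_opNorm _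
    _ ≤ C' * ‖hbL2.toLp b - (haL2 k).toLp (a k)‖ :=
        mul_le_mul_of_nonneg_right (hC' k) (norm_nonneg _)
    _ ≤ C' * (‖(2 * C : ℝ)‖ * Real.sqrt ((m k).toReal)) := by
        refine mul_le_mul_of_nonneg_left ?_ (le_trans (norm_nonneg (T 0)) (hC' 0))
        rw [← MemLp.toLp_sub, Lp.norm_toLp]
        have hfin : (‖(2 * C : ℝ)‖₊ : ENNReal) * (m k) ^ (1 / (2:ℝ)) ≠ ⊤ := by
          exact ENNReal.mul_ne_top ENNReal.coe_ne_top
            (ENNReal.rpow_lt_top_of_nonneg (by norm_num) (hmfin k)).ne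
        refine le_trans (ENNReal.toReal_mono hfin (hele k)) ?_
        rw [ENNReal.toReal_mul, ← ENNReal.toReal_rpow, Real.sqrt_eq_rpow,
          ENNReal.coe_toReal, coe_nnnorm]
  -- the error term tends to zero
  have htend0 : Tendsto (fun k => T k (hbL2.toLp b) - T k ((haL2 k).toLp (a k)))
      atTop (𝓝 0) := by
    refine squeeze_zero_norm herr ?_
    have hm0 : Tendsto (fun k => (m k).toReal) atTop (𝓝 0) := by
      have := (ENNReal.tendsto_toReal (a := 0) (by simp)).comp (hphase N)
      exact this
    have : Tendsto (fun k => C' * (‖(2 * C : ℝ)‖ * Real.sqrt ((m k).toReal)))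
        atTop (𝓝 (C' * (‖(2 * C : ℝ)‖ * Real.sqrt 0))) := by
      exact (Real.continuous_sqrt.continuousAt.tendsto.comp hm0).const_mul _ |>.const_mul _
    simpa using this
  -- conclusion
  have hlim : Tendsto (fun k => ∫ x in ball (0 : EuclideanSpace ℝ (Fin n)) N, (inner ℝ (g k x) (b x) : ℝ))
      atTop (𝓝 (∫ x in ball (0 : EuclideanSpace ℝ (Fin n)) N, (inner ℝ (G x) (b x) : ℝ))) := hweak N b hbL2
  have hlim' : Tendsto (fun k => ∫ x in ball (0 : EuclideanSpace ℝ (Fin n)) N, (inner ℝ (g k x) (b x) : ℝ))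
      atTop (𝓝 0) := by
    have heq : ∀ k, (∫ x in ball (0 : EuclideanSpace ℝ (Fin n)) N, (inner ℝ (g k x) (b x) : ℝ))
        = T k (hbL2.toLp b) - T k ((haL2 k).toLp (a k)) := by
      intro k
      rw [hTval k b hbL2, hTval k (a k) (haL2 k), hsol' k, sub_zero]
    simp only [heq]
    exact htend0
  rw [htarget]
  exact tendsto_nhds_unique hlim hlim'
end
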